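/- arXiv:2204.02364 — 8 statements merged into one kernel-verified Lean document; each statement's English description precedes it below -/
import Mathlib

section
/- Let G₁ be the weighted graph on the index set I₁ = {i ∈ [n] : uᵢ* ≠ 0} with edges {i,j} whenever C_{ij} > 0. Suppose G₁ is connected and non-bipartite, and every index i with uᵢ* = 0 that is not adjacent to any index in I₁ satisfies C_{ii} > 0. Then any vector u ∈ ℝⁿ satisfying uᵢuⱼ = uᵢ*uⱼ* for all pairs (i,j) with C_{ij} > 0 must satisfy u uᵀ = u* (u*)ᵀ, i.e., u = u* or u = -u*. -/
/-!
On the support of `u*` put `r i = uᵢ / uᵢ*`. Every edge `{i, j}` of `G₁` gives `r i * r j = 1`,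
so `r` is constant along even walks and inverts along odd ones. An odd closed walk at `v` forces
`r v * r v = 1`, and then connectedness makes `r` equal to the sign `ε = r v` on the whole
support, i.e. `u = ε u*` there. Off the support, a neighbour `j` in the support gives
`uᵢ (ε uⱼ*) = 0`, and otherwise `C_{ii} > 0` gives `uᵢ² = 0`; either way `uᵢ = 0`.
-/

namespace SimpleGraph

variable {V M : Type*} [CommMonoid M] {G : SimpleGraph V} {r : V → M}

theorem Walk.parity_of_adj_mul_eq_one (hr : ∀ a c, G.Adj a c → r a * r c = 1) {a b : V}
    (w : G.Walk a b) : (Even w.length → r a = r b) ∧ (Odd w.length → r a * r b = 1) := by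
  induction w with
  | nil => simp
  | @cons a c b hac w ih =>
    simp only [Walk.length_cons, Nat.even_add_one, Nat.odd_add_one, Nat.not_even_iff_odd,
      Nat.not_odd_iff_even]
    refine ⟨fun hodd => ?_, fun heven => ?_⟩
    · calc r a = r a * (r c * r b) := by rw [ih.2 hodd, mul_one]
        _ = r b := by rw [← mul_assoc, hr a c hac, one_mul]
    · rw [← ih.1 heven, hr a c hac]

theorem eq_of_reachable_of_odd_closed_walk (hr : ∀ a c, G.Adj a c → r a * r c = 1) {v b : V}
    (w : G.Walk v v) (hw : Odd w.length) (hvb : G.Reachable v b) : r b = r v := by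
  obtain ⟨p⟩ := hvb
  have hv := (w.parity_of_adj_mul_eq_one hr).2 hw
  rcases Nat.even_or_odd p.length with heven | hodd
  · exact ((p.parity_of_adj_mul_eq_one hr).1 heven).symm
  · calc r b = r v * r v * r b := by rw [hv, one_mul]
      _ = r v := by rw [mul_assoc, (p.parity_of_adj_mul_eq_one hr).2 hodd, mul_one]

end SimpleGraph

open SimpleGraph

theorem exists_eq_mul_on_support {V K : Type*} [Field K] {G : SimpleGraph V} {s u : V → K}
    (hadj : ∀ i j, G.Adj i j → s i ≠ 0 ∧ s j ≠ 0 ∧ u i * u j = s i * s j)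
    (hconn : ∀ i j, s i ≠ 0 → s j ≠ 0 → G.Reachable i j)
    (hodd : ∃ (v : V) (w : G.Walk v v), Odd w.length ∧ s v ≠ 0) :
    ∃ ε : K, ε * ε = 1 ∧ ∀ j, s j ≠ 0 → u j = ε * s j := by
  set r : V → K := fun i => u i / s i
  have hr : ∀ a c, G.Adj a c → r a * r c = 1 := fun a c hac => by
    obtain ⟨ha, hc, hprod⟩ := hadj a c hac
    rw [div_mul_div_comm, hprod, div_self (mul_ne_zero ha hc)]
  obtain ⟨v, w, hw, hv⟩ := hodd
  refine ⟨r v, (w.parity_of_adj_mul_eq_one hr).2 hw, fun j hj => ?_⟩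
  rw [← eq_of_reachable_of_odd_closed_walk hr w hw (hconn v j hv hj), div_mul_cancel₀ _ hj]

theorem eq_zero_off_support {V : Type*} (C : V → V → ℝ) {s u : V → ℝ} (hnn : ∀ i j, 0 ≤ C i j)
    (hI00 : ∀ i, s i = 0 → (∀ j, s j ≠ 0 → C i j = 0) → 0 < C i i)
    (hu : ∀ i j, 0 < C i j → u i * u j = s i * s j) {ε : ℝ} (hε : ε ≠ 0)
    (hsupp : ∀ j, s j ≠ 0 → u j = ε * s j) {i : V} (hi : s i = 0) : u i = 0 := by
  by_cases hnbr : ∃ j, s j ≠ 0 ∧ 0 < C i j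
  · obtain ⟨j, hj, hCij⟩ := hnbr
    have hprod : u i * (ε * s j) = 0 := by rw [← hsupp j hj, hu i j hCij, hi, zero_mul]
    exact (mul_eq_zero.mp hprod).resolve_right (mul_ne_zero hε hj)
  · push Not at hnbr
    have hCii := hI00 i hi fun j hj => le_antisymm (hnbr j hj) (hnn i j)
    exact mul_self_eq_zero.mp (by rw [hu i i hCii, hi, mul_zero])

theorem stmt_0_general {n : ℕ} (C : Fin n → Fin n → ℝ) (ustar : Fin n → ℝ)
    (hnn : ∀ i j, 0 ≤ C i j)
    (G : SimpleGraph (Fin n))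
    (hG : ∀ i j, G.Adj i j ↔ i ≠ j ∧ ustar i ≠ 0 ∧ ustar j ≠ 0 ∧ 0 < C i j)
    (hconn : ∀ i j, ustar i ≠ 0 → ustar j ≠ 0 → G.Reachable i j)
    (hodd : ∃ (v : Fin n) (w : G.Walk v v), Odd w.length ∧ ustar v ≠ 0)
    (hI00 : ∀ i, ustar i = 0 → (∀ j, ustar j ≠ 0 → C i j = 0) → 0 < C i i)
    (u : Fin n → ℝ)
    (hu : ∀ i j, 0 < C i j → u i * u j = ustar i * ustar j) :
    u = ustar ∨ u = fun i => -ustar i := by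
  have hadj : ∀ i j, G.Adj i j → ustar i ≠ 0 ∧ ustar j ≠ 0 ∧ u i * u j = ustar i * ustar j :=
    fun i j hij => by
      obtain ⟨-, hi, hj, hCij⟩ := (hG i j).mp hij
      exact ⟨hi, hj, hu i j hCij⟩
  obtain ⟨ε, hε, hsupp⟩ := exists_eq_mul_on_support hadj hconn hodd
  have hεu : u = fun i => ε * ustar i := funext fun i => by
    by_cases hi : ustar i = 0
    · rw [eq_zero_off_support C hnn hI00 hu (left_ne_zero_of_mul_eq_one hε) hsupp hi, hi,
        mul_zero]
    · exact hsupp i hi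
  rcases mul_self_eq_one_iff.mp hε with rfl | rfl
  · left
    simpa using hεu
  · right
    simpa using hεu

/-- Theorem 1 (sufficiency): if the subgraph `G₁` induced by `C` on the support of `u*`
is connected and non-bipartite (contains an odd closed walk), and every zero index not
adjacent to the support has a positive self-weight, then any `u` matching all observed
products equals `u*` up to a global sign. -/
theorem stmt_0 {n : ℕ} (C : Fin n → Fin n → ℝ) (ustar : Fin n → ℝ)
    (hsym : ∀ i j, C i j = C j i) (hnn : ∀ i j, 0 ≤ C i j)
    (G : SimpleGraph (Fin n))
    (hG : ∀ i j, G.Adj i j ↔ i ≠ j ∧ ustar i ≠ 0 ∧ ustar j ≠ 0 ∧ 0 < C i j)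
    (hconn : ∀ i j, ustar i ≠ 0 → ustar j ≠ 0 → G.Reachable i j)
    (hodd : ∃ (v : Fin n) (w : G.Walk v v), Odd w.length ∧ ustar v ≠ 0)
    (hI00 : ∀ i, ustar i = 0 → (∀ j, ustar j ≠ 0 → C i j = 0) → 0 < C i i)
    (u : Fin n → ℝ)
    (hu : ∀ i j, 0 < C i j → u i * u j = ustar i * ustar j) :
    u = ustar ∨ u = fun i => -ustar i :=
  stmt_0_general C ustar hnn G hG hconn hodd hI00 u hu
end

section
/- Suppose the graph G₁ induced by C on the support of u* is bipartite with parts I and J (so C_{ij} = 0 whenever i,j ∈ I or i,j ∈ J, including diagonal entries). Define u by uᵢ = uᵢ*/2 for i ∈ I, uᵢ = 2uᵢ* for i ∈ J, and uᵢ = 0 elsewhere. Then uᵢuⱼ = uᵢ*uⱼ* for all pairs (i,j) with C_{ij} > 0, and if J contains at least one element then u uᵀ ≠ u*(u*)ᵀ. -/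
/-!
Scaling `u*` by `1/2` on `I` and by `2` on `J` leaves every product `uᵢ uⱼ` across the bipartition
unchanged, and every edge of the support graph is such a pair (edges leaving the support have both
products zero). On a vertex `j ∈ J` the diagonal product is multiplied by `4`, which is a change
because `u*ⱼ ≠ 0`.
-/

section BipartiteRescaling

variable {ι : Type*} {ustar u : ι → ℝ} {I J : Set ι}

theorem mul_eq_of_mem_of_mem (huI : ∀ i ∈ I, u i = ustar i / 2)
    (huJ : ∀ i ∈ J, u i = 2 * ustar i) {i j : ι} (hi : i ∈ I) (hj : j ∈ J) :
    u i * u j = ustar i * ustar j := by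
  rw [huI i hi, huJ j hj]
  ring

theorem mul_eq_of_bipartite_rescale (r : ι → ι → Prop)
    (hbip : ∀ i j, r i j → ustar i ≠ 0 → ustar j ≠ 0 → (i ∈ I ∧ j ∈ J) ∨ (i ∈ J ∧ j ∈ I))
    (huI : ∀ i ∈ I, u i = ustar i / 2) (huJ : ∀ i ∈ J, u i = 2 * ustar i)
    (hu0 : ∀ i, ustar i = 0 → u i = 0) {i j : ι} (hij : r i j) :
    u i * u j = ustar i * ustar j := by
  by_cases hi : ustar i = 0
  · simp [hu0 i hi, hi]
  by_cases hj : ustar j = 0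
  · simp [hu0 j hj, hj]
  rcases hbip i j hij hi hj with ⟨hiI, hjJ⟩ | ⟨hiJ, hjI⟩
  · exact mul_eq_of_mem_of_mem huI huJ hiI hjJ
  · rw [mul_comm, mul_comm (ustar i)]
    exact mul_eq_of_mem_of_mem huI huJ hjI hiJ

end BipartiteRescaling

theorem two_mul_self_ne_self_mul_self {a : ℝ} (ha : a ≠ 0) : 2 * a * (2 * a) ≠ a * a := by
  intro h
  have : a * a = 0 := by linarith
  exact mul_self_ne_zero.mpr ha this

theorem stmt_2_general {n : ℕ} (C : Fin n → Fin n → ℝ) (ustar : Fin n → ℝ)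
    (I J : Set (Fin n))
    (hunion : ∀ i, ustar i ≠ 0 ↔ i ∈ I ∪ J)
    (hbip : ∀ i j, 0 < C i j → ustar i ≠ 0 → ustar j ≠ 0 →
      (i ∈ I ∧ j ∈ J) ∨ (i ∈ J ∧ j ∈ I))
    (u : Fin n → ℝ)
    (huI : ∀ i ∈ I, u i = ustar i / 2)
    (huJ : ∀ i ∈ J, u i = 2 * ustar i)
    (hu0 : ∀ i, ustar i = 0 → u i = 0) :
    (∀ i j, 0 < C i j → u i * u j = ustar i * ustar j) ∧
      (J.Nonempty → ∃ i j, u i * u j ≠ ustar i * ustar j) := by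
  refine ⟨fun i j hC => mul_eq_of_bipartite_rescale _ hbip huI huJ hu0 hC, ?_⟩
  rintro ⟨j, hj⟩
  refine ⟨j, j, ?_⟩
  rw [huJ j hj]
  exact two_mul_self_ne_self_mul_self ((hunion j).mpr (Or.inr hj))

/-- Case II of the necessity part of Theorem 1: a bipartite support graph yields an
essentially different solution obtained by rescaling the two parts. -/
theorem stmt_2 {n : ℕ} (C : Fin n → Fin n → ℝ) (ustar : Fin n → ℝ)
    (hsym : ∀ i j, C i j = C j i) (hnn : ∀ i j, 0 ≤ C i j)
    (I J : Set (Fin n))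
    (hunion : ∀ i, ustar i ≠ 0 ↔ i ∈ I ∪ J)
    (hdisj : Disjoint I J)
    (hbip : ∀ i j, 0 < C i j → ustar i ≠ 0 → ustar j ≠ 0 →
      (i ∈ I ∧ j ∈ J) ∨ (i ∈ J ∧ j ∈ I))
    (u : Fin n → ℝ)
    (huI : ∀ i ∈ I, u i = ustar i / 2)
    (huJ : ∀ i ∈ J, u i = 2 * ustar i)
    (hu0 : ∀ i, ustar i = 0 → u i = 0) :
    (∀ i j, 0 < C i j → u i * u j = ustar i * ustar j) ∧
      (J.Nonempty → ∃ i j, u i * u j ≠ ustar i * ustar j) :=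
  stmt_2_general C ustar I J hunion hbip u huI huJ hu0
end

section
/- Let u, u* ∈ ℝⁿ with uᵢ* ≠ 0 for all i in a set S, and suppose uᵢuⱼ = uᵢ*uⱼ* along all edges of a cycle i₁, i₂, …, i_{2k+1}, i₁ of odd length 2k+1 contained in S. Then u_{i₁}² = (u*_{i₁})². -/
/-!
The ratios `r s = u (idx s) / u* (idx s)` satisfy `r s * r (s + 1) = 1` along the cycle, so
`r` is 2-periodic. Going once around a cycle of odd length `2k + 1` with steps of two lands
on the predecessor, hence `r (s - 1) = r s` and `r s ^ 2 = 1`.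
-/

section OddCycle

variable {M : Type*} [Monoid M]

theorem ZMod.periodic_two_of_mul_add_one_eq_one {n : ℕ} {f : ZMod n → M}
    (hf : ∀ s, f s * f (s + 1) = 1) : Function.Periodic f 2 := fun s =>
  calc f (s + 2) = f s * f (s + 1) * f (s + 1 + 1) := by
        rw [hf, one_mul, add_assoc, one_add_one_eq_two]
    _ = f s * (f (s + 1) * f (s + 1 + 1)) := mul_assoc ..
    _ = f s := by rw [hf, mul_one]

theorem ZMod.sq_eq_one_of_mul_add_one_eq_one {k : ℕ} {f : ZMod (2 * k + 1) → M}
    (hf : ∀ s, f s * f (s + 1) = 1) (s : ZMod (2 * k + 1)) : f s ^ 2 = 1 := by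
  have hk : ((k : ℕ) : ZMod (2 * k + 1)) * 2 = -1 := by
    have h0 : ((2 * k + 1 : ℕ) : ZMod (2 * k + 1)) = 0 := ZMod.natCast_self _
    push_cast at h0
    linear_combination h0
  have hpred : f (s - 1) = f s := by
    simpa [hk, sub_eq_add_neg] using
      (ZMod.periodic_two_of_mul_add_one_eq_one hf).nat_mul k s
  simpa [hpred, sq] using hf (s - 1)

end OddCycle

/-- Along an odd cycle on which all products agree with those of `u*` (whose entries
are nonzero on the cycle), the squared value at the starting vertex is recovered. -/
theorem stmt_3 {ι : Type*} (u ustar : ι → ℝ) (S : Set ι) (k : ℕ)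
    (idx : ZMod (2 * k + 1) → ι)
    (hS : ∀ s, idx s ∈ S)
    (hne : ∀ i ∈ S, ustar i ≠ 0)
    (hedge : ∀ s, u (idx s) * u (idx (s + 1)) = ustar (idx s) * ustar (idx (s + 1))) :
    (u (idx 0)) ^ 2 = (ustar (idx 0)) ^ 2 := by
  have hne' : ∀ s, ustar (idx s) ≠ 0 := fun s => hne _ (hS s)
  have hratio : ∀ s, u (idx s) / ustar (idx s) * (u (idx (s + 1)) / ustar (idx (s + 1))) = 1 :=
    fun s => by
      rw [div_mul_div_comm, hedge, div_self (mul_ne_zero (hne' s) (hne' (s + 1)))]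
  have h := ZMod.sq_eq_one_of_mul_add_one_eq_one hratio 0
  rwa [div_pow, div_eq_one_iff_eq (pow_ne_zero 2 (hne' 0))] at h
end

section
/- Let δ ∈ [0,1) and let C ∈ ℝ^{n×n} have nonnegative entries with ∑_{i,j} C_{ij} = 1 and min_{i,j} C_{ij} / max_{i,j} C_{ij} ≥ (1-δ)/(1+δ) (with all entries positive). Suppose C̃ ∈ ℝ^{n×n} has nonnegative entries summing to 1 and C̃ vanishes on a set N of N entry positions. Then ∑_{(i,j)∈N} C_{ij} ≥ (1-δ)N / ((1+δ)n² - 2δN), and consequently the entrywise ℓ₁ distance satisfies ‖C - C̃‖₁ ≥ 2(1-δ)N / ((1+δ)n² - 2δN). -/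
/-!
Write `S` for the mass of `C` on `N` and `D = (1+δ)n² - 2δN`. Comparing every entry in `N`
with every entry outside it through the ratio condition gives
`(1-δ) N (1 - S) ≤ (1+δ) (n² - N) S`, which rearranges to `(1-δ) N ≤ D S`.
Since `C̃` vanishes on `N` but has the same total mass as `C`, it must put an excess of at
least `S` over `C` outside `N`, so `‖C - C̃‖₁ ≥ 2S`.
-/

open Finset

section

variable {α : Type*}

lemma mul_card_mul_sum_le_of_mul_le (c : α → ℝ) {a b : ℝ} (h : ∀ x y, a * c y ≤ b * c x)
    (s t : Finset α) : a * #s * ∑ y ∈ t, c y ≤ b * #t * ∑ x ∈ s, c x :=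
  calc a * #s * ∑ y ∈ t, c y = ∑ _x ∈ s, ∑ y ∈ t, a * c y := by
        rw [sum_const, nsmul_eq_mul, ← mul_sum]; ring
    _ ≤ ∑ x ∈ s, ∑ _y ∈ t, b * c x := sum_le_sum fun x _ => sum_le_sum fun y _ => h x y
    _ = b * #t * ∑ x ∈ s, c x := by
        simp only [sum_const, nsmul_eq_mul, mul_sum]; exact sum_congr rfl fun _ _ => by ring

variable [Fintype α] [DecidableEq α]

lemma div_le_sum_of_forall_mul_le {c : α → ℝ} {δ : ℝ} (hδ₀ : -1 ≤ δ) (hδ₁ : δ ≤ 1)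
    (hc : ∀ x, 0 ≤ c x) (hsum : ∑ x, c x = 1) (h : ∀ x y, (1 - δ) * c y ≤ (1 + δ) * c x)
    (s : Finset α) :
    (1 - δ) * #s / ((1 + δ) * Fintype.card α - 2 * δ * #s) ≤ ∑ x ∈ s, c x := by
  have hcard : (#sᶜ : ℝ) = Fintype.card α - #s := by
    rw [card_compl, Nat.cast_sub (card_le_univ s)]
  have hcompl : ∑ x ∈ sᶜ, c x = 1 - ∑ x ∈ s, c x := by
    rw [← hsum, ← sum_add_sum_compl s]; ring
  have key := mul_card_mul_sum_le_of_mul_le c h s sᶜ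
  rw [hcard, hcompl] at key
  have hs : (#s : ℝ) ≤ Fintype.card α := mod_cast card_le_univ s
  refine div_le_of_le_mul₀ (by nlinarith) (sum_nonneg fun x _ => hc x) ?_
  linear_combination key

lemma two_mul_sum_le_sum_abs_sub {c d : α → ℝ} (hsum : ∑ x, c x = ∑ x, d x) {s : Finset α}
    (hd : ∀ x ∈ s, d x = 0) : 2 * ∑ x ∈ s, c x ≤ ∑ x, |c x - d x| := by
  have hds : ∑ x ∈ sᶜ, d x = ∑ x, c x := by
    rw [hsum, ← sum_add_sum_compl s, sum_eq_zero hd, zero_add]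
  have hin : ∑ x ∈ s, c x ≤ ∑ x ∈ s, |c x - d x| :=
    sum_le_sum fun x hx => by rw [hd x hx, sub_zero]; exact le_abs_self _
  have hout : ∑ x ∈ sᶜ, (d x - c x) ≤ ∑ x ∈ sᶜ, |c x - d x| :=
    sum_le_sum fun x _ => abs_sub_comm (c x) (d x) ▸ le_abs_self _
  rw [sum_sub_distrib, hds, ← sum_add_sum_compl s] at hout
  rw [← sum_add_sum_compl s]
  linarith

end

theorem stmt_6_general {n : ℕ} (δ : ℝ) (hδ : 0 ≤ δ ∧ δ < 1)
    (C Ctil : Fin n → Fin n → ℝ)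
    (hCpos : ∀ i j, 0 < C i j)
    (hCsum : ∑ i, ∑ j, C i j = 1)
    (hratio : ∀ i j k l, (1 - δ) * C k l ≤ (1 + δ) * C i j)
    (hCtsum : ∑ i, ∑ j, Ctil i j = 1)
    (N : Finset (Fin n × Fin n))
    (hzero : ∀ p ∈ N, Ctil p.1 p.2 = 0) :
    (1 - δ) * N.card / ((1 + δ) * n ^ 2 - 2 * δ * N.card) ≤ ∑ p ∈ N, C p.1 p.2 ∧
      2 * (1 - δ) * N.card / ((1 + δ) * n ^ 2 - 2 * δ * N.card) ≤
        ∑ i, ∑ j, |C i j - Ctil i j| := by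
  have hcard : ((Fintype.card (Fin n × Fin n) : ℕ) : ℝ) = n ^ 2 := by simp [sq]
  have hmass := div_le_sum_of_forall_mul_le (c := fun p : Fin n × Fin n => C p.1 p.2)
    (by linarith [hδ.1]) hδ.2.le (fun p => (hCpos p.1 p.2).le)
    (by rw [Fintype.sum_prod_type, hCsum]) (fun p q => hratio p.1 p.2 q.1 q.2) N
  rw [hcard] at hmass
  have hl1 := two_mul_sum_le_sum_abs_sub (c := fun p : Fin n × Fin n => C p.1 p.2)
    (d := fun p => Ctil p.1 p.2) (by rw [Fintype.sum_prod_type, Fintype.sum_prod_type, hCsum,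
      hCtsum]) hzero
  rw [Fintype.sum_prod_type] at hl1
  refine ⟨hmass, ?_⟩
  rw [mul_assoc, mul_div_assoc]
  linarith

/-- Lemma: under the RIP-type entry-ratio condition, the mass of `C` on any set of `N`
positions where `C̃` vanishes is at least `(1-δ)N / ((1+δ)n² - 2δN)`, and consequently
the entrywise ℓ₁ distance between `C` and `C̃` is at least twice that. -/
theorem stmt_6 {n : ℕ} (δ : ℝ) (hδ : 0 ≤ δ ∧ δ < 1)
    (C Ctil : Fin n → Fin n → ℝ)
    (hCpos : ∀ i j, 0 < C i j)
    (hCsum : ∑ i, ∑ j, C i j = 1)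
    (hratio : ∀ i j k l, (1 - δ) * C k l ≤ (1 + δ) * C i j)
    (hCtnn : ∀ i j, 0 ≤ Ctil i j)
    (hCtsum : ∑ i, ∑ j, Ctil i j = 1)
    (N : Finset (Fin n × Fin n))
    (hzero : ∀ p ∈ N, Ctil p.1 p.2 = 0) :
    (1 - δ) * N.card / ((1 + δ) * n ^ 2 - 2 * δ * N.card) ≤ ∑ p ∈ N, C p.1 p.2 ∧
      2 * (1 - δ) * N.card / ((1 + δ) * n ^ 2 - 2 * δ * N.card) ≤
        ∑ i, ∑ j, |C i j - Ctil i j| :=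
  stmt_6_general δ hδ C Ctil hCpos hCsum hratio hCtsum N hzero
end

section
/- Let ε ∈ (0,1), m ≥ 1, and let f(x) = ∑_{i=1}^m (xᵢ² - 1)² + ε ∑_{i≠j} (xᵢxⱼ - 1)². Suppose x ∈ ℝᵐ is a critical point of f (∇f(x) = 0) and let S₁ = ∑ᵢ xᵢ, S₂ = ∑ᵢ xᵢ². If (ε/(1-ε))·S₂ - 1 > 0, then all components of x are equal, and moreover x ∈ {0, 𝟙, -𝟙} where 𝟙 is the all-ones vector. -/
/-!
Since `∑ᵢ ∑ⱼ (yᵢyⱼ - 1)² = S₂² - 2S₁² + m²`, the objective equals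
`(1 - ε) ∑ᵢ (yᵢ² - 1)² + ε (S₂² - 2S₁² + m²)`, so the critical point equations read
`xᵢ³ + a xᵢ = b` with `a = (ε/(1-ε)) S₂ - 1` and `b = (ε/(1-ε)) S₁` independent of `i`.
For `a > 0` the cubic `t ↦ t³ + a t` is strictly increasing, so all coordinates equal a
common `c`, and the equation becomes `(c³ - c)(1 - ε + ε m) = 0`.
-/

open Finset

variable {ι : Type*} [Fintype ι]

lemma strictMono_cube_add_mul {a : ℝ} (ha : 0 ≤ a) : StrictMono fun t : ℝ => t ^ 3 + a * t :=
  (Odd.strictMono_pow (by decide)).add_monotone (monotone_id.const_mul ha)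

lemma eq_zero_or_eq_one_or_eq_neg_one_of_pow_three_eq_self {c : ℝ} (h : c ^ 3 = c) :
    c = 0 ∨ c = 1 ∨ c = -1 := by
  have : c * ((c - 1) * (c + 1)) = 0 := by linear_combination h
  rcases mul_eq_zero.1 this with h0 | h1
  · exact Or.inl h0
  rcases mul_eq_zero.1 h1 with h1 | h1
  · exact Or.inr (Or.inl (by linarith))
  · exact Or.inr (Or.inr (by linarith))

omit [Fintype ι] in
lemma forall_eq_zero_or_forall_eq_one_or_forall_eq_neg_one {x : ι → ℝ}
    (hconst : ∀ i j, x i = x j) (hx : ∀ i, x i = 0 ∨ x i = 1 ∨ x i = -1) :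
    (∀ i, x i = 0) ∨ (∀ i, x i = 1) ∨ (∀ i, x i = -1) := by
  rcases isEmpty_or_nonempty ι with hι | ⟨⟨i₀⟩⟩
  · exact Or.inl isEmptyElim
  rcases hx i₀ with h | h | h
  · exact Or.inl fun i => (hconst i i₀).trans h
  · exact Or.inr (Or.inl fun i => (hconst i i₀).trans h)
  · exact Or.inr (Or.inr fun i => (hconst i i₀).trans h)

lemma hasDerivAt_sum_apply_add_smul_single [DecidableEq ι] (x : EuclideanSpace ℝ ι) (i : ι)
    {g : ℝ → ℝ} {g' : ℝ} (hg : HasDerivAt g g' (x i)) :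
    HasDerivAt (fun t : ℝ => ∑ j, g ((x + t • EuclideanSpace.single i (1 : ℝ)) j))
      g' 0 := by
  have hsplit : ∀ t : ℝ, ∑ j, g ((x + t • EuclideanSpace.single i (1 : ℝ)) j) =
      ∑ j ∈ univ.erase i, g (x j) + g (x i + t) := by
    intro t
    rw [← add_sum_erase _ _ (mem_univ i), add_comm]
    congr 1
    · refine sum_congr rfl fun j hj => ?_
      simp [ne_of_mem_erase hj]
    · simp
  simp_rw [hsplit]
  exact (HasDerivAt.comp_const_add (x i) 0 (by simpa using hg)).const_add _

variable [DecidableEq ι]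

def pairObjective (ε : ℝ) (y : EuclideanSpace ℝ ι) : ℝ :=
  ∑ i, ((y i) ^ 2 - 1) ^ 2 + ε * ∑ i, ∑ j ∈ univ.erase i, (y i * y j - 1) ^ 2

lemma pairObjective_eq (ε : ℝ) (y : EuclideanSpace ℝ ι) :
    pairObjective ε y = (1 - ε) * ∑ i, ((y i) ^ 2 - 1) ^ 2 +
      ε * ((∑ i, y i ^ 2) ^ 2 - 2 * (∑ i, y i) ^ 2 + (Fintype.card ι : ℝ) ^ 2) := by
  have hexpand : ∀ i j, (y i * y j - 1) ^ 2 = y i ^ 2 * y j ^ 2 - 2 * (y i * y j) + 1 :=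
    fun i j => by ring
  have hfull : ∑ i, ∑ j, (y i * y j - 1) ^ 2 =
      (∑ i, y i ^ 2) ^ 2 - 2 * (∑ i, y i) ^ 2 + (Fintype.card ι : ℝ) ^ 2 := by
    simp only [hexpand, sum_add_distrib, sum_sub_distrib, ← mul_sum, ← sum_mul, sq (∑ i, _)]
    simp [sq]
  have hdiag : ∀ i, (y i * y i - 1) ^ 2 = (y i ^ 2 - 1) ^ 2 := fun i => by ring
  simp only [pairObjective, sum_erase_eq_sub (mem_univ _), sum_sub_distrib, hfull, hdiag]
  ring

lemma hasDerivAt_pairObjective_add_smul_single (ε : ℝ) (x : EuclideanSpace ℝ ι) (i : ι) :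
    HasDerivAt (fun t : ℝ => pairObjective ε (x + t • EuclideanSpace.single i 1))
      (4 * ((1 - ε) * (x i ^ 3 - x i) + ε * ((∑ j, x j ^ 2) * x i - ∑ j, x j))) 0 := by
  have hQ := hasDerivAt_sum_apply_add_smul_single x i (g := fun s => (s ^ 2 - 1) ^ 2)
    (((hasDerivAt_pow 2 (x i)).sub_const 1).fun_pow 2)
  have hS₂ := hasDerivAt_sum_apply_add_smul_single x i (hasDerivAt_pow 2 (x i))
  have hS₁ := hasDerivAt_sum_apply_add_smul_single x i (hasDerivAt_id' (x i))
  have h := (hQ.const_mul (1 - ε)).add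
    ((((hS₂.fun_pow 2).sub ((hS₁.fun_pow 2).const_mul 2)).add_const
      ((Fintype.card ι : ℝ) ^ 2)).const_mul ε)
  simp_rw [pairObjective_eq]
  refine h.congr_deriv ?_
  simp
  ring

lemma pairObjective_critical_eq {ε : ℝ} {x : EuclideanSpace ℝ ι}
    (hcrit : fderiv ℝ (pairObjective ε) x = 0) (i : ι) :
    (1 - ε) * (x i ^ 3 - x i) + ε * ((∑ j, x j ^ 2) * x i - ∑ j, x j) = 0 := by
  have hdiff : DifferentiableAt ℝ (pairObjective ε) x := by
    unfold pairObjective; fun_prop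
  have hline : HasDerivAt (fun t : ℝ => x + t • EuclideanSpace.single i 1)
      (EuclideanSpace.single i 1) 0 := by
    simpa using
      ((hasDerivAt_id (0 : ℝ)).smul_const (EuclideanSpace.single i (1 : ℝ))).const_add x
  have hzero := hdiff.hasFDerivAt.comp_hasDerivAt_of_eq 0 hline (by simp)
  rw [hcrit] at hzero
  have := (hasDerivAt_pairObjective_add_smul_single ε x i).unique hzero
  simpa only [zero_apply, mul_eq_zero, OfNat.ofNat_ne_zero, false_or]
    using this

theorem stmt_9_general {m : ℕ} (ε : ℝ) (hε : 0 < ε ∧ ε < 1)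
    (x : EuclideanSpace ℝ (Fin m))
    (hcrit : fderiv ℝ
      (fun y : EuclideanSpace ℝ (Fin m) =>
        ∑ i, ((y i) ^ 2 - 1) ^ 2 +
          ε * ∑ i, ∑ j ∈ Finset.univ.erase i, (y i * y j - 1) ^ 2) x = 0)
    (hS : ε / (1 - ε) * (∑ i, (x i) ^ 2) - 1 > 0) :
    (∀ i j, x i = x j) ∧
      ((∀ i, x i = 0) ∨ (∀ i, x i = 1) ∨ (∀ i, x i = -1)) := by
  obtain ⟨hε₀, hε₁⟩ := hε
  have hcrit_eq := pairObjective_critical_eq (ε := ε) hcrit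
  have hcubic : ∀ i, x i ^ 3 + (ε / (1 - ε) * ∑ j, x j ^ 2 - 1) * x i =
      ε / (1 - ε) * ∑ j, x j := fun i => by
    have := hcrit_eq i
    field_simp [(sub_pos.2 hε₁).ne']
    linear_combination this
  have hconst : ∀ i j, x i = x j := fun i j =>
    (strictMono_cube_add_mul hS.le).injective ((hcubic i).trans (hcubic j).symm)
  refine ⟨hconst, forall_eq_zero_or_forall_eq_one_or_forall_eq_neg_one hconst fun i => ?_⟩
  have hS₁ : ∑ j, x j = m * x i := by simp [hconst _ i]
  have hS₂ : ∑ j, x j ^ 2 = m * x i ^ 2 := by simp [hconst _ i]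
  have hfactor : (x i ^ 3 - x i) * (1 - ε + ε * m) = 0 := by
    have := hcrit_eq i
    rw [hS₁, hS₂] at this
    linear_combination this
  have hpos : 0 < 1 - ε + ε * m := by positivity
  exact eq_zero_or_eq_one_or_eq_neg_one_of_pow_three_eq_self
    (sub_eq_zero.1 ((mul_eq_zero.1 hfactor).resolve_right hpos.ne'))

/-- If `x` is a critical point of the one-parameter objective and
`(ε/(1-ε))·S₂ - 1 > 0`, then all components of `x` are equal and `x` is one of
`0`, the all-ones vector, or its negative. -/
theorem stmt_9 {m : ℕ} (hm : 1 ≤ m) (ε : ℝ) (hε : 0 < ε ∧ ε < 1)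
    (x : EuclideanSpace ℝ (Fin m))
    (hcrit : fderiv ℝ
      (fun y : EuclideanSpace ℝ (Fin m) =>
        ∑ i, ((y i) ^ 2 - 1) ^ 2 +
          ε * ∑ i, ∑ j ∈ Finset.univ.erase i, (y i * y j - 1) ^ 2) x = 0)
    (hS : ε / (1 - ε) * (∑ i, (x i) ^ 2) - 1 > 0) :
    (∀ i j, x i = x j) ∧
      ((∀ i, x i = 0) ∨ (∀ i, x i = 1) ∨ (∀ i, x i = -1)) :=
  stmt_9_general ε hε x hcrit hS
end

section
/- Let m ≥ 2 be an even integer and ε ∈ (0, 1/(m+1)). Let x ∈ ℝᵐ satisfy xᵢ² = (1-ε)/(1+(m-1)ε) for all i and ∑ᵢ xᵢ = 0 (possible since m is even). Then x is a critical point of f(x) = ∑ᵢ (xᵢ² - 1)² + ε ∑_{i≠j} (xᵢxⱼ - 1)², i.e., ∇f(x) = 0. -/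
/-!
Writing `∑_{j ≠ i}` as the full sum minus the diagonal term, the objective becomes
`(1 - ε) ∑ᵢ (yᵢ² - 1)² + ε ∑ᵢ ∑ⱼ (yᵢyⱼ - 1)²`, whose `i`-th partial derivative is
`4 (1 - ε)(xᵢ³ - xᵢ) + 4 ε (xᵢ ∑ⱼ xⱼ² - ∑ⱼ xⱼ)`. At a point with `xⱼ² = t` for all `j` and
`∑ⱼ xⱼ = 0` this is `4 xᵢ (t (1 + (m - 1) ε) - (1 - ε))`, which vanishes for
`t = (1 - ε) / (1 + (m - 1) ε)`, and also when that denominator is `0`: then `t = 0` by the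
convention `a / 0 = 0`, so `x = 0`.
-/

open Finset

section Objective

variable {ι : Type*} [Fintype ι]

lemma hasFDerivAt_sum_sq_sub_one_sq (x : EuclideanSpace ℝ ι) :
    HasFDerivAt (fun y : EuclideanSpace ℝ ι => ∑ i, (y i ^ 2 - 1) ^ 2)
      (∑ i, (4 * (x i ^ 3 - x i)) • EuclideanSpace.proj (𝕜 := ℝ) i) x := by
  refine HasFDerivAt.fun_sum fun i _ => ?_
  have h := (hasDerivAt_pow 2 (x i ^ 2 - 1)).comp_hasFDerivAt x
    (((hasDerivAt_pow 2 (x i)).comp_hasFDerivAt x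
      (EuclideanSpace.proj (𝕜 := ℝ) i).hasFDerivAt).sub_const 1)
  refine h.congr_fderiv ?_
  rw [smul_smul]
  congr 1
  push_cast
  ring

lemma hasFDerivAt_sum_sum_mul_sub_one_sq (x : EuclideanSpace ℝ ι) :
    HasFDerivAt (fun y : EuclideanSpace ℝ ι => ∑ i, ∑ j, (y i * y j - 1) ^ 2)
      (∑ i, (4 * ∑ j, x j * (x i * x j - 1)) • EuclideanSpace.proj (𝕜 := ℝ) i) x := by
  have h := HasFDerivAt.fun_sum (u := univ) fun i _ => HasFDerivAt.fun_sum (u := univ) fun j _ =>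
    (hasDerivAt_pow 2 (x i * x j - 1)).comp_hasFDerivAt x
      (((EuclideanSpace.proj (𝕜 := ℝ) i).hasFDerivAt.mul
        (EuclideanSpace.proj (𝕜 := ℝ) j).hasFDerivAt).sub_const 1)
  refine h.congr_fderiv ?_
  ext v
  simp only [_root_.sum_apply, smul_apply, add_apply, smul_eq_mul, mul_add, sum_add_distrib,
    PiLp.proj_apply]
  rw [sum_comm, ← sum_add_distrib]
  refine sum_congr rfl fun i _ => ?_
  rw [← sum_add_distrib, mul_sum, sum_mul]
  refine sum_congr rfl fun j _ => ?_
  push_cast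
  ring

lemma sum_sq_sub_one_sq_add_mul_sum_erase [DecidableEq ι] (ε : ℝ) (y : EuclideanSpace ℝ ι) :
    ∑ i, (y i ^ 2 - 1) ^ 2 + ε * ∑ i, ∑ j ∈ univ.erase i, (y i * y j - 1) ^ 2 =
      (1 - ε) * ∑ i, (y i ^ 2 - 1) ^ 2 + ε * ∑ i, ∑ j, (y i * y j - 1) ^ 2 := by
  simp only [sum_erase_eq_sub (mem_univ _), sum_sub_distrib]
  ring_nf

end Objective

lemma mul_sq_mul_sub_eq_zero_of_sq_eq_div {a b c : ℝ} (h : c ^ 2 = a / b) :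
    c * (c ^ 2 * b - a) = 0 := by
  rcases eq_or_ne b 0 with rfl | hb
  · simp_all
  · rw [h, div_mul_cancel₀ a hb, sub_self, mul_zero]

theorem stmt_11_general {m : ℕ}
    (ε : ℝ)
    (x : EuclideanSpace ℝ (Fin m))
    (hx2 : ∀ i, (x i) ^ 2 = (1 - ε) / (1 + ((m : ℝ) - 1) * ε))
    (hxsum : ∑ i, x i = 0) :
    fderiv ℝ
      (fun y : EuclideanSpace ℝ (Fin m) =>
        ∑ i, ((y i) ^ 2 - 1) ^ 2 +
          ε * ∑ i, ∑ j ∈ Finset.univ.erase i, (y i * y j - 1) ^ 2) x = 0 := by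
  have hsum_sq : ∑ j, x j ^ 2 = m * ((1 - ε) / (1 + ((m : ℝ) - 1) * ε)) := by simp [hx2]
  simp only [sum_sq_sub_one_sq_add_mul_sum_erase]
  rw [(((hasFDerivAt_sum_sq_sub_one_sq x).const_mul (1 - ε)).fun_add
    ((hasFDerivAt_sum_sum_mul_sub_one_sq x).const_mul ε)).fderiv, smul_sum, smul_sum,
    ← sum_add_distrib]
  refine sum_eq_zero fun i _ => ?_
  have hpair : ∑ j, x j * (x i * x j - 1) = x i * ∑ j, x j ^ 2 := by
    simp only [mul_sub, mul_one, sum_sub_distrib, hxsum, sub_zero, mul_sum]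
    exact sum_congr rfl fun j _ => by ring
  rw [smul_smul, smul_smul, ← add_smul, hpair, hsum_sq]
  convert zero_smul ℝ _
  linear_combination 4 * mul_sq_mul_sub_eq_zero_of_sq_eq_div (hx2 i) - (4 * ε * m * x i) * hx2 i

/-- For even `m` and small `ε`, any vector with components `±√((1-ε)/(1+(m-1)ε))`
summing to zero is a critical point of the one-parameter objective. -/
theorem stmt_11 {m : ℕ} (hm : 2 ≤ m) (hmeven : Even m)
    (ε : ℝ) (hε : 0 < ε ∧ ε < 1 / (m + 1))
    (x : EuclideanSpace ℝ (Fin m))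
    (hx2 : ∀ i, (x i) ^ 2 = (1 - ε) / (1 + ((m : ℝ) - 1) * ε))
    (hxsum : ∑ i, x i = 0) :
    fderiv ℝ
      (fun y : EuclideanSpace ℝ (Fin m) =>
        ∑ i, ((y i) ^ 2 - 1) ^ 2 +
          ε * ∑ i, ∑ j ∈ Finset.univ.erase i, (y i * y j - 1) ^ 2) x = 0 :=
  stmt_11_general ε x hx2 hxsum
end

section
/- Let m ≥ 2 be even and 0 < ε < 1/(m+1). Let x ∈ ℝᵐ with xᵢ² = t := (1-ε)/(1+(m-1)ε) for all i and ∑ᵢ xᵢ = 0, and let H be the Hessian of f(x) = ∑ᵢ(xᵢ²-1)² + ε∑_{i≠j}(xᵢxⱼ-1)² at x. Then H is positive definite; equivalently, for every nonzero c ∈ ℝᵐ, [(3+(m-3)ε)t - 1 + ε]·∑ᵢcᵢ² - ε(∑ᵢcᵢ)² + 2εt·(∑ᵢ sign(xᵢ)cᵢ)² > 0. -/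
/-!
Writing `t = (1 - ε)/(1 + (m - 1)ε)` and `A = (3 + (m - 3)ε)t - 1 + ε`, the constraint `xᵢ² = t`
makes the Hessian equal to `4 (A·I - ε·J + 2ε·x xᵀ)`, with `J` the all-ones matrix. The rank-one
term is positive semidefinite, and by Cauchy–Schwarz `ε(∑ cᵢ)² ≤ mε ∑ cᵢ²`, so both claims reduce
to `mε < A`. Clearing the denominator, `A - mε` has numerator `(1 - (m + 1)ε)(2 + (m - 2)ε) > 0`.
-/

open Finset Matrix

lemma mul_lt_hessianIdentityCoeff {m ε : ℝ} (hm : 0 ≤ m) (hε : 0 < ε) (hεm : ε < 1 / (m + 1)) :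
    m * ε < (3 + (m - 3) * ε) * ((1 - ε) / (1 + (m - 1) * ε)) - 1 + ε := by
  rw [lt_div_iff₀ (by positivity)] at hεm
  have hD : 0 < 1 + (m - 1) * ε := by nlinarith
  have h : (3 + (m - 3) * ε) * ((1 - ε) / (1 + (m - 1) * ε)) - 1 + ε - m * ε
      = (1 - ε * (m + 1)) * (2 + (m - 2) * ε) / (1 + (m - 1) * ε) := by
    rw [eq_div_iff hD.ne']
    linear_combination (3 + (m - 3) * ε) * div_mul_cancel₀ (1 - ε) hD.ne'
  have : 0 < (1 - ε * (m + 1)) * (2 + (m - 2) * ε) / (1 + (m - 1) * ε) :=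
    div_pos (mul_pos (by linarith) (by nlinarith)) hD
  linarith

section

variable {ι : Type*} [Fintype ι]

lemma mul_sq_sum_lt_mul_sum_sq {a e : ℝ} (he : 0 ≤ e) (hae : Fintype.card ι * e < a)
    {c : ι → ℝ} (hc : c ≠ 0) :
    e * (∑ i, c i) ^ 2 < a * ∑ i, c i ^ 2 := by
  have hpos : 0 < ∑ i, c i ^ 2 := by
    obtain ⟨i, hi⟩ := Function.ne_iff.mp hc
    exact sum_pos' (fun j _ => sq_nonneg (c j)) ⟨i, mem_univ i, sq_pos_of_ne_zero hi⟩
  calc e * (∑ i, c i) ^ 2 ≤ e * (Fintype.card ι * ∑ i, c i ^ 2) :=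
        mul_le_mul_of_nonneg_left sq_sum_le_card_mul_sum_sq he
    _ = (Fintype.card ι * e) * ∑ i, c i ^ 2 := by ring
    _ < a * ∑ i, c i ^ 2 := mul_lt_mul_of_pos_right hae hpos

variable [DecidableEq ι]

lemma dotProduct_smul_one_sub_smul_allOnes_mulVec (a e : ℝ) (c : ι → ℝ) :
    star c ⬝ᵥ (a • (1 : Matrix ι ι ℝ) - e • of fun _ _ => 1) *ᵥ c
      = a * ∑ i, c i ^ 2 - e * (∑ i, c i) ^ 2 := by
  have hJ : (of fun _ _ => (1 : ℝ) : Matrix ι ι ℝ) *ᵥ c = fun _ => ∑ i, c i := by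
    ext
    simp [mulVec, dotProduct]
  rw [sub_mulVec, smul_mulVec, smul_mulVec, one_mulVec, hJ, dotProduct_sub, dotProduct_smul,
    dotProduct_smul]
  simp [dotProduct, sq, sum_mul]

lemma posDef_smul_one_sub_smul_allOnes {a e : ℝ} (he : 0 ≤ e) (hae : Fintype.card ι * e < a) :
    (a • (1 : Matrix ι ι ℝ) - e • of fun _ _ => 1).PosDef := by
  rw [posDef_iff_dotProduct_mulVec, isHermitian_iff_isSymm]
  refine ⟨?_, fun c hc => ?_⟩
  · simp only [IsSymm, transpose_sub, transpose_smul, transpose_one]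
    ext
    simp
  · rw [dotProduct_smul_one_sub_smul_allOnes_mulVec, sub_pos]
    exact mul_sq_sum_lt_mul_sum_sq he hae hc

lemma hessian_eq_of_sq_eq {ε t : ℝ} {x : ι → ℝ} (hx : ∀ i, x i ^ 2 = t) {H : Matrix ι ι ℝ}
    (hH : ∀ i j, H i j =
      if i = j then 4 * (3 * (x i) ^ 2 - 1 + ε * ∑ l ∈ univ.erase i, (x l) ^ 2)
      else 4 * ε * (2 * x i * x j - 1)) :
    H = (4 : ℝ) • ((((3 + (Fintype.card ι - 3) * ε) * t - 1 + ε) • 1 - ε • of fun _ _ => 1)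
      + (2 * ε) • vecMulVec x (star x)) := by
  ext i j
  rw [hH]
  split_ifs with h
  · subst h
    rw [sum_erase_eq_sub (mem_univ i)]
    simp only [hx, sum_const, card_univ, nsmul_eq_mul, vecMulVec, Pi.star_apply, star_trivial,
      Matrix.smul_apply, Matrix.add_apply, Matrix.sub_apply, one_apply_eq, smul_eq_mul, mul_one,
      of_apply]
    linear_combination (-8 * ε) * hx i
  · simp only [smul_of, vecMulVec, Pi.star_apply, star_trivial, Matrix.smul_apply,
      Matrix.add_apply, Matrix.sub_apply, ne_eq, h, not_false_eq_true, one_apply_ne, smul_eq_mul,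
      mul_zero, of_apply, Pi.smul_apply, mul_one, zero_sub]
    ring

end

theorem stmt_16_general {m : ℕ}
    (ε : ℝ) (hε : 0 < ε ∧ ε < 1 / (m + 1))
    (x : Fin m → ℝ)
    (hx2 : ∀ i, (x i) ^ 2 = (1 - ε) / (1 + ((m : ℝ) - 1) * ε))
    (H : Matrix (Fin m) (Fin m) ℝ)
    (hH : ∀ i j, H i j =
      if i = j then 4 * (3 * (x i) ^ 2 - 1 + ε * ∑ l ∈ Finset.univ.erase i, (x l) ^ 2)
      else 4 * ε * (2 * x i * x j - 1)) :
    H.PosDef ∧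
      ∀ c : Fin m → ℝ, c ≠ 0 →
        ((3 + ((m : ℝ) - 3) * ε) * ((1 - ε) / (1 + ((m : ℝ) - 1) * ε)) - 1 + ε)
            * (∑ i, (c i) ^ 2)
          - ε * (∑ i, c i) ^ 2
          + 2 * ε * ((1 - ε) / (1 + ((m : ℝ) - 1) * ε))
            * (∑ i, Real.sign (x i) * c i) ^ 2 > 0 := by
  obtain ⟨hε0, hε1⟩ := hε
  have hm : (0 : ℝ) ≤ m := Nat.cast_nonneg m
  have hcoeff : Fintype.card (Fin m) * ε
      < (3 + ((m : ℝ) - 3) * ε) * ((1 - ε) / (1 + ((m : ℝ) - 1) * ε)) - 1 + ε := by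
    rw [Fintype.card_fin]
    exact mul_lt_hessianIdentityCoeff hm hε0 hε1
  have ht : 0 < (1 - ε) / (1 + ((m : ℝ) - 1) * ε) := by
    have hεm : ε * (m + 1) < 1 := (lt_div_iff₀ (by positivity)).1 hε1
    exact div_pos (by nlinarith) (by nlinarith)
  refine ⟨?_, fun c hc => ?_⟩
  · rw [hessian_eq_of_sq_eq hx2 hH, Fintype.card_fin]
    exact ((posDef_smul_one_sub_smul_allOnes hε0.le hcoeff).add_posSemidef
      ((posSemidef_vecMulVec_self_star x).smul (by positivity))).smul (by norm_num)
  · exact add_pos_of_pos_of_nonneg (sub_pos.2 (mul_sq_sum_lt_mul_sum_sq hε0.le hcoeff hc))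
      (by positivity)

/-- For even `m` and `0 < ε < 1/(m+1)`, at the spurious point with `xᵢ² = t` and
`∑ xᵢ = 0`, the Hessian of the one-parameter objective is positive definite;
equivalently, the quadratic form `[(3+(m-3)ε)t - 1 + ε]∑cᵢ² - ε(∑cᵢ)² + 2εt(∑sign(xᵢ)cᵢ)²`
is positive for every nonzero `c`. -/
theorem stmt_16 {m : ℕ} (hm : 2 ≤ m) (hmeven : Even m)
    (ε : ℝ) (hε : 0 < ε ∧ ε < 1 / (m + 1))
    (x : Fin m → ℝ)
    (hx2 : ∀ i, (x i) ^ 2 = (1 - ε) / (1 + ((m : ℝ) - 1) * ε))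
    (hxsum : ∑ i, x i = 0)
    (H : Matrix (Fin m) (Fin m) ℝ)
    (hH : ∀ i j, H i j =
      if i = j then 4 * (3 * (x i) ^ 2 - 1 + ε * ∑ l ∈ Finset.univ.erase i, (x l) ^ 2)
      else 4 * ε * (2 * x i * x j - 1)) :
    H.PosDef ∧
      ∀ c : Fin m → ℝ, c ≠ 0 →
        ((3 + ((m : ℝ) - 3) * ε) * ((1 - ε) / (1 + ((m : ℝ) - 1) * ε)) - 1 + ε)
            * (∑ i, (c i) ^ 2)
          - ε * (∑ i, c i) ^ 2
          + 2 * ε * ((1 - ε) / (1 + ((m : ℝ) - 1) * ε))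
            * (∑ i, Real.sign (x i) * c i) ^ 2 > 0 :=
  stmt_16_general ε hε x hx2 H hH
end

section
/- Let m ≥ 1 and ε > 18/m with ε ≤ 1. Suppose x ∈ ℝᵐ is a second-order critical point of f(x) = ∑ᵢ(xᵢ²-1)² + ε∑_{i≠j}(xᵢxⱼ-1)² (i.e., ∇f(x)=0 and ∇²f(x) ⪰ 0) with S₂ = ∑ᵢxᵢ² > 0. Then S₂ ≥ m²/(2(m+8)); in particular S₂ ≥ m/18. -/
/-!
Write `Sₖ = ∑ xᵢᵏ` and `B = mε + 1 - ε`. The first-order condition along `x` and along `𝟙`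
gives `(1 - ε)(S₄ - S₂) = ε(S₁² - S₂²)` and `(1 - ε)(S₃ - S₁) = ε(m - S₂)S₁`. The Hessian form
at `x + σ𝟙` is a polynomial in `S₁, …, S₄`; eliminating `S₃, S₄` and taking `σ = ±1` with
`σS₁ = -|S₁|` leaves
  `0 ≤ (B + 4(1 - ε))S₂ + 4εS₁² - 4B|S₁| - mB`.
The right side is convex in `|S₁| ∈ [0, s]`, `s = √(mS₂)` (Cauchy–Schwarz), so it is also
nonnegative at `|S₁| = 0` or at `|S₁| = s`. The first case gives `S₂ ≥ mB/(B + 4(1 - ε))`; the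
second reads `B(5S₂ - 4s - m) ≥ 0`, i.e. `s ≥ m`, so `S₂ ≥ m`. When `mε ≥ 3` both bounds
exceed `m²/(2(m + 8))`.
-/

open Finset Matrix

variable {ι : Type*} [Fintype ι]

theorem sum_eq_of_quartic {f : ι → ℝ} (x : ι → ℝ) (a b c d e : ℝ)
    (hf : ∀ i, f i = a * x i ^ 4 + b * x i ^ 3 + c * x i ^ 2 + d * x i + e) :
    ∑ i, f i = a * ∑ i, x i ^ 4 + b * ∑ i, x i ^ 3 + c * ∑ i, x i ^ 2 + d * ∑ i, x i
      + e * Fintype.card ι := by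
  simp only [hf, sum_add_distrib, ← mul_sum, sum_const, card_univ, nsmul_eq_mul]
  ring

variable [DecidableEq ι]

theorem sum_sum_erase_eq_sub {R : Type*} [AddCommGroup R] (f : ι → ι → R) :
    ∑ i, ∑ j ∈ univ.erase i, f i j = ∑ i, ∑ j, f i j - ∑ i, f i i := by
  simp only [sum_erase_eq_sub (mem_univ _), sum_sub_distrib]

def objective (ε : ℝ) (y : EuclideanSpace ℝ ι) : ℝ :=
  ∑ i, ((y i) ^ 2 - 1) ^ 2 + ε * ∑ i, ∑ j ∈ univ.erase i, (y i * y j - 1) ^ 2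

theorem objective_eq (ε : ℝ) (y : EuclideanSpace ℝ ι) :
    objective ε y = (1 - ε) * ∑ i, ((y i) ^ 2 - 1) ^ 2 +
      ε * ((∑ i, y i ^ 2) ^ 2 - 2 * (∑ i, y i) ^ 2 + Fintype.card ι ^ 2) := by
  have hfull : ∑ i, ∑ j, (y i * y j - 1) ^ 2
      = (∑ i, y i ^ 2) ^ 2 - 2 * (∑ i, y i) ^ 2 + Fintype.card ι ^ 2 := by
    simp only [sub_sq, sq (∑ i, _), sum_mul_sum, sum_add_distrib, sum_sub_distrib, mul_pow]
    simp only [mul_one, one_pow, sum_const, card_univ, nsmul_eq_mul, mul_sum]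
    ring
  rw [objective, sum_sum_erase_eq_sub, hfull]
  simp only [← sq]
  ring

theorem hasLineDerivAt_objective (ε : ℝ) (x v : EuclideanSpace ℝ ι) :
    HasLineDerivAt ℝ (objective ε)
      (4 * ((1 - ε) * ∑ i, (x i ^ 2 - 1) * x i * v i +
        ε * ((∑ i, x i ^ 2) * ∑ i, x i * v i - (∑ i, x i) * ∑ i, v i))) x v := by
  have hline : ∀ i, HasDerivAt (fun t : ℝ => x i + t * v i) (v i) 0 := fun i => by
    simpa using ((hasDerivAt_id (0 : ℝ)).mul_const (v i)).const_add (x i)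
  have hquartic : HasDerivAt (fun t : ℝ => ∑ i, ((x i + t * v i) ^ 2 - 1) ^ 2)
      (∑ i, 4 * ((x i ^ 2 - 1) * x i * v i)) 0 :=
    HasDerivAt.fun_sum fun i _ =>
      ((((hline i).fun_pow 2).sub_const 1).fun_pow 2).congr_deriv (by ring)
  have hsq : HasDerivAt (fun t : ℝ => ∑ i, (x i + t * v i) ^ 2) (∑ i, 2 * (x i * v i)) 0 :=
    HasDerivAt.fun_sum fun i _ => ((hline i).fun_pow 2).congr_deriv (by ring)
  have hlin : HasDerivAt (fun t : ℝ => ∑ i, (x i + t * v i)) (∑ i, v i) 0 :=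
    HasDerivAt.fun_sum fun i _ => hline i
  simp only [HasLineDerivAt, objective_eq, PiLp.add_apply, PiLp.smul_apply, smul_eq_mul]
  refine (((hquartic.const_mul (1 - ε)).fun_add ((((hsq.fun_pow 2).fun_sub
    ((hlin.fun_pow 2).const_mul 2)).add_const _).const_mul ε))).congr_deriv ?_
  simp only [zero_mul, add_zero, ← mul_sum]
  ring

theorem objective_directional_eq_zero {ε : ℝ} {x : EuclideanSpace ℝ ι}
    (hcrit : fderiv ℝ (objective ε) x = 0) (v : EuclideanSpace ℝ ι) :
    (1 - ε) * ∑ i, (x i ^ 2 - 1) * x i * v i +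
      ε * ((∑ i, x i ^ 2) * ∑ i, x i * v i - (∑ i, x i) * ∑ i, v i) = 0 := by
  have hdiff : DifferentiableAt ℝ (objective ε) x := by
    unfold objective
    fun_prop
  have h := (hdiff.hasFDerivAt.hasLineDerivAt v).unique (hasLineDerivAt_objective ε x v)
  rw [hcrit, _root_.zero_apply] at h
  linarith

theorem quadForm_hessian_eq {ε : ℝ} {x : ι → ℝ} {H : Matrix ι ι ℝ}
    (hH : ∀ i j, H i j =
      if i = j then 4 * (3 * (x i) ^ 2 - 1 + ε * ∑ l ∈ univ.erase i, (x l) ^ 2)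
      else 4 * ε * (2 * x i * x j - 1)) (c : ι → ℝ) :
    c ⬝ᵥ (H *ᵥ c) = 4 * ((1 - ε) * ∑ i, (3 * x i ^ 2 - 1) * c i ^ 2 +
      ε * ((∑ i, x i ^ 2) * ∑ i, c i ^ 2 + 2 * (∑ i, x i * c i) ^ 2 - (∑ i, c i) ^ 2)) := by
  set S := ∑ i, x i ^ 2
  set P := ∑ i, x i * c i with hP
  set T := ∑ i, c i with hT
  have hdiag_add_rank_two : ∀ i j, H i j =
      (if i = j then 4 * ((1 - ε) * (3 * x i ^ 2 - 1) + ε * S) else 0)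
        + 4 * ε * (2 * x i * x j - 1) := by
    intro i j
    rw [hH]
    split_ifs with h
    · subst h
      rw [sum_erase_eq_sub (mem_univ _)]
      ring
    · ring
  have hrow : ∀ i, (H *ᵥ c) i =
      4 * ((1 - ε) * (3 * x i ^ 2 - 1) + ε * S) * c i + 4 * ε * (2 * x i * P - T) := by
    intro i
    simp only [mulVec, dotProduct, hdiag_add_rank_two, add_mul, sum_add_distrib, ite_mul,
      zero_mul, sum_ite_eq, mem_univ, if_true, hP, hT, mul_sub, mul_sum, ← sum_sub_distrib]
    congr 1
    exact sum_congr rfl fun j _ => by ring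
  calc c ⬝ᵥ (H *ᵥ c)
      = ∑ i, (4 * (1 - ε) * ((3 * x i ^ 2 - 1) * c i ^ 2) + 4 * ε * S * c i ^ 2
          + 8 * ε * P * (x i * c i) - 4 * ε * T * c i) :=
        sum_congr rfl fun i _ => by rw [hrow]; ring
    _ = _ := by
        simp only [sum_add_distrib, sum_sub_distrib, ← mul_sum, ← hP, ← hT]
        ring

theorem key_inequality_of_secondOrderCritical {ε : ℝ} {x : EuclideanSpace ℝ ι}
    (hcrit : fderiv ℝ (objective ε) x = 0) {H : Matrix ι ι ℝ}
    (hH : ∀ i j, H i j =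
      if i = j then 4 * (3 * (x i) ^ 2 - 1 + ε * ∑ l ∈ univ.erase i, (x l) ^ 2)
      else 4 * ε * (2 * x i * x j - 1))
    (hpsd : H.PosSemidef) :
    0 ≤ (Fintype.card ι * ε + 5 * (1 - ε)) * ∑ i, x i ^ 2 + 4 * ε * (∑ i, x i) ^ 2
      - 4 * (Fintype.card ι * ε + 1 - ε) * |∑ i, x i|
      - Fintype.card ι * (Fintype.card ι * ε + 1 - ε) := by
  have hx := objective_directional_eq_zero hcrit x
  have h1 := objective_directional_eq_zero hcrit (WithLp.toLp 2 1)
  simp only [Pi.one_apply, mul_one, sum_const, card_univ, nsmul_eq_mul] at h1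
  have hshift (σ : ℝ) := hpsd.dotProduct_mulVec_nonneg (fun i => x i + σ)
  simp only [star_trivial, quadForm_hessian_eq hH] at hshift
  have e1 : ∑ i, (x i ^ 2 - 1) * x i * x i = _ := sum_eq_of_quartic x 1 0 (-1) 0 0 fun i => by ring
  have e2 : ∑ i, x i * x i = _ := sum_eq_of_quartic x 0 0 1 0 0 fun i => by ring
  have e3 : ∑ i, (x i ^ 2 - 1) * x i = _ := sum_eq_of_quartic x 0 1 0 (-1) 0 fun i => by ring
  have e4 (σ : ℝ) : ∑ i, (3 * x i ^ 2 - 1) * (x i + σ) ^ 2 = _ :=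
    sum_eq_of_quartic x 3 (6 * σ) (3 * σ ^ 2 - 1) (-2 * σ) (-σ ^ 2) fun i => by ring
  have e5 (σ : ℝ) : ∑ i, (x i + σ) ^ 2 = _ :=
    sum_eq_of_quartic x 0 0 1 (2 * σ) (σ ^ 2) fun i => by ring
  have e6 (σ : ℝ) : ∑ i, x i * (x i + σ) = _ := sum_eq_of_quartic x 0 0 1 σ 0 fun i => by ring
  have e7 (σ : ℝ) : ∑ i, (x i + σ) = _ := sum_eq_of_quartic x 0 0 0 1 σ fun i => by ring
  rw [e1, e2] at hx
  rw [e3] at h1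
  simp only [e4, e5, e6, e7] at hshift
  rcases abs_cases (∑ i, x i) with ⟨habs, _⟩ | ⟨habs, _⟩ <;> rw [habs]
  · linarith [hshift (-1)]
  · linarith [hshift 1]

theorem lower_bound_of_key_inequality {n ε S₁ S₂ : ℝ} (hn : 1 ≤ n) (hε₀ : 0 ≤ ε) (hε₁ : ε ≤ 1)
    (hCS : S₁ ^ 2 ≤ n * S₂)
    (key : 0 ≤ (n * ε + 5 * (1 - ε)) * S₂ + 4 * ε * S₁ ^ 2 - 4 * (n * ε + 1 - ε) * |S₁|
      - n * (n * ε + 1 - ε)) :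
    n * (n * ε + 1 - ε) / (n * ε + 5 * (1 - ε)) ≤ S₂ := by
  set B := n * ε + 1 - ε
  set A := n * ε + 5 * (1 - ε)
  have hB : 0 < B := by nlinarith
  have hBA : B ≤ A := by linarith
  rw [div_le_iff₀ (hB.trans_le hBA)]
  refine le_of_not_gt fun h => ?_
  obtain ⟨s, hs0, hs2, hts⟩ : ∃ s, 0 ≤ s ∧ s ^ 2 = n * S₂ ∧ |S₁| ≤ s :=
    ⟨√(n * S₂), Real.sqrt_nonneg _, Real.sq_sqrt ((sq_nonneg _).trans hCS), Real.abs_le_sqrt hCS⟩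
  rw [← sq_abs] at key
  have ht : 0 < |S₁| := by
    refine (abs_nonneg S₁).lt_of_ne fun h0 => ?_
    rw [← h0] at key
    linarith
  have hconvex : s * (A * S₂ + 4 * ε * |S₁| ^ 2 - 4 * B * |S₁| - n * B)
      = (s - |S₁|) * (A * S₂ - n * B) + |S₁| * B * (5 * S₂ - 4 * s - n)
        + 4 * ε * |S₁| * s * (|S₁| - s) := by
    linear_combination (4 * ε * |S₁|) * hs2
  have hendpoint : 0 ≤ 5 * S₂ - 4 * s - n := by
    refine nonneg_of_mul_nonneg_right (a := |S₁| * B) ?_ (mul_pos ht hB)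
    nlinarith [mul_nonneg hs0 key, mul_nonneg (sub_nonneg.2 hts) (sub_nonneg.2 h.le),
      mul_nonneg (mul_nonneg ht.le hs0) (sub_nonneg.2 hts)]
  have hsn : n ≤ s := by nlinarith
  nlinarith

theorem stmt_19_general {m : ℕ} (hm : 1 ≤ m) (ε : ℝ)
    (hε : 18 / (m : ℝ) < ε ∧ ε ≤ 1)
    (x : EuclideanSpace ℝ (Fin m))
    (hcrit : fderiv ℝ
      (fun y : EuclideanSpace ℝ (Fin m) =>
        ∑ i, ((y i) ^ 2 - 1) ^ 2 +
          ε * ∑ i, ∑ j ∈ Finset.univ.erase i, (y i * y j - 1) ^ 2) x = 0)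
    (H : Matrix (Fin m) (Fin m) ℝ)
    (hH : ∀ i j, H i j =
      if i = j then 4 * (3 * (x i) ^ 2 - 1 + ε * ∑ l ∈ Finset.univ.erase i, (x l) ^ 2)
      else 4 * ε * (2 * x i * x j - 1))
    (hpsd : H.PosSemidef) :
    (m : ℝ) ^ 2 / (2 * ((m : ℝ) + 8)) ≤ ∑ i, (x i) ^ 2 ∧
      (m : ℝ) / 18 ≤ ∑ i, (x i) ^ 2 := by
  obtain ⟨hε18, hε1⟩ := hε
  have hm1 : (1 : ℝ) ≤ m := by exact_mod_cast hm
  have hmε : 18 < m * ε := by rwa [div_lt_iff₀ (by positivity), mul_comm] at hε18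
  have hε0 : 0 ≤ ε := (div_nonneg (by norm_num) m.cast_nonneg).trans hε18.le
  have key := key_inequality_of_secondOrderCritical hcrit hH hpsd
  rw [Fintype.card_fin] at key
  have hCS : (∑ i, x i) ^ 2 ≤ m * ∑ i, x i ^ 2 := by
    simpa using sq_sum_le_card_mul_sum_sq (s := univ) (f := fun i => x i)
  have hbound := lower_bound_of_key_inequality hm1 hε0 hε1 hCS key
  have hcompare :
      (m : ℝ) ^ 2 / (2 * (m + 8)) ≤ m * (m * ε + 1 - ε) / (m * ε + 5 * (1 - ε)) := by
    rw [div_le_div_iff₀ (by positivity) (by nlinarith)]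
    nlinarith
  have h18 : (m : ℝ) / 18 ≤ m ^ 2 / (2 * (m + 8)) := by
    rw [div_le_div_iff₀ (by norm_num) (by positivity)]
    nlinarith
  exact ⟨hcompare.trans hbound, (h18.trans hcompare).trans hbound⟩

/-- At a second-order critical point of the one-parameter objective with `ε > 18/m`,
the second moment `S₂ = ∑ xᵢ²` (if positive) satisfies `S₂ ≥ m²/(2(m+8)) ≥ m/18`. -/
theorem stmt_19 {m : ℕ} (hm : 1 ≤ m) (ε : ℝ)
    (hε : 18 / (m : ℝ) < ε ∧ ε ≤ 1)
    (x : EuclideanSpace ℝ (Fin m))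
    (hcrit : fderiv ℝ
      (fun y : EuclideanSpace ℝ (Fin m) =>
        ∑ i, ((y i) ^ 2 - 1) ^ 2 +
          ε * ∑ i, ∑ j ∈ Finset.univ.erase i, (y i * y j - 1) ^ 2) x = 0)
    (H : Matrix (Fin m) (Fin m) ℝ)
    (hH : ∀ i j, H i j =
      if i = j then 4 * (3 * (x i) ^ 2 - 1 + ε * ∑ l ∈ Finset.univ.erase i, (x l) ^ 2)
      else 4 * ε * (2 * x i * x j - 1))
    (hpsd : H.PosSemidef)
    (hS2 : 0 < ∑ i, (x i) ^ 2) :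
    (m : ℝ) ^ 2 / (2 * ((m : ℝ) + 8)) ≤ ∑ i, (x i) ^ 2 ∧
      (m : ℝ) / 18 ≤ ∑ i, (x i) ^ 2 :=
  stmt_19_general hm ε hε x hcrit H hH hpsd
end
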